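/- arXiv:2003.05829 — 2 statements merged into one kernel-verified Lean document; each statement's English description precedes it below -/
import Mathlib

section
/- Let k ≥ 4 be an integer, f(u) := (k²/2) sin(2u), and for λ, μ > 0 let G_{λ,μ}(r) := f(Q_λ(r) - Q_μ(r)) - f(Q_λ(r)) + f(Q_μ(r)) - 4 (r/μ)^k ΛQ_λ(r)² - 4 (r/λ)^{-k} ΛQ_μ(r)². There is a constant C > 0 such that for all λ, μ > 0 with ν := λ/μ ≤ 1/2: |∫₀^∞ μ^{-1} ΛQ(r/μ) · r^{-2} G_{λ,μ}(r) · r dr| ≤ C ν^{2k+1}/λ and |∫₀^∞ λ^{-1} ΛQ(r/λ) · r^{-2} G_{λ,μ}(r) · r dr| ≤ C ν^{2k}/λ. -/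
open MeasureTheory Set Filter

noncomputable section

/-- The `k`-equivariant harmonic map profile `Q(r) = 2 arctan(r^k)`. -/
def Qfun (k : ℕ) (r : ℝ) : ℝ := 2 * Real.arctan (r ^ k)

/-- `ΛQ(r) = 2k r^k / (1 + r^{2k})`. -/
def LamQ (k : ℕ) (r : ℝ) : ℝ := 2 * k * r ^ k / (1 + r ^ (2 * k))

/-- `f(u) = (k²/2) sin(2u)`. -/
def fNL (k : ℕ) (u : ℝ) : ℝ := (k : ℝ) ^ 2 / 2 * Real.sin (2 * u)

/-- `G_{λ,μ}(r) = f(Q_λ - Q_μ) - f(Q_λ) + f(Q_μ) - 4 (r/μ)^k (ΛQ_λ)² - 4 (r/λ)^{-k} (ΛQ_μ)²`. -/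
def Gfun (k : ℕ) (lam mu : ℝ) (r : ℝ) : ℝ :=
  fNL k (Qfun k (r / lam) - Qfun k (r / mu)) - fNL k (Qfun k (r / lam)) + fNL k (Qfun k (r / mu))
    - 4 * (r / mu) ^ k * LamQ k (r / lam) ^ 2
    - 4 * (r / lam) ^ (-(k : ℤ)) * LamQ k (r / mu) ^ 2

/-!
Write `W = (λ/μ)^k` and `y = (r/μ)^k`, so that `(r/λ)^k = y/W`. The double-angle formulas for
`2 arctan` turn `G_{λ,μ}(r)` into the rational function `-16 k² W² · profile W y`. After the
substitution `y = (r/μ)^k`, whose derivative is `k y / r`, the two integrands are dominated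
by `W²/μ · majorant 1 y` and `W³/λ · majorant W y`, where `majorant a` has the elementary
primitive `(3/(2a)) arctan(y/a) - (3a/2)/(a² + y²)` and hence integral `(3π + 6)/(4a)` over
`(0, ∞)`. Since `W²/μ = ν^{2k+1}/λ`, both estimates hold with `C = (24π + 48) k²`.
-/

open Real Topology

lemma sin_two_mul_arctan (z : ℝ) : sin (2 * arctan z) = 2 * z / (1 + z ^ 2) := by
  have hsq : √(1 + z ^ 2) ^ 2 = 1 + z ^ 2 := sq_sqrt (by positivity)
  have hpos : √(1 + z ^ 2) ≠ 0 := by positivity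
  rw [sin_two_mul, sin_arctan, cos_arctan]
  field_simp
  rw [hsq]

lemma cos_two_mul_arctan (z : ℝ) : cos (2 * arctan z) = (1 - z ^ 2) / (1 + z ^ 2) := by
  have hsq : √(1 + z ^ 2) ^ 2 = 1 + z ^ 2 := sq_sqrt (by positivity)
  rw [cos_two_mul, cos_arctan, div_pow, hsq]
  field_simp
  ring

def profile (W y : ℝ) : ℝ :=
  y * (W ^ 3 + 3 * W * y ^ 2 + 3 * y ^ 4 + y ^ 6) / ((W ^ 2 + y ^ 2) ^ 2 * (1 + y ^ 2) ^ 2)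

lemma Gfun_eq_profile (k : ℕ) {lam mu r : ℝ} (hlam : 0 < lam) (hmu : 0 < mu) (hr : 0 < r) :
    Gfun k lam mu r
      = -16 * k ^ 2 * ((lam / mu) ^ k) ^ 2 * profile ((lam / mu) ^ k) ((r / mu) ^ k) := by
  set W := (lam / mu) ^ k
  set y := (r / mu) ^ k
  have hW : 0 < W := by positivity
  have hy : 0 < y := by positivity
  have hx : (r / lam) ^ k = y / W := by rw [← div_pow]; congr 1; field_simp
  have hQ : ∀ z, 2 * Qfun k z = 2 * (2 * arctan (z ^ k)) := fun z => rfl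
  have sin4 : ∀ z : ℝ, sin (2 * (2 * arctan z)) = 4 * z * (1 - z ^ 2) / (1 + z ^ 2) ^ 2 := by
    intro z
    rw [sin_two_mul, sin_two_mul_arctan, cos_two_mul_arctan]
    field_simp
    ring
  have cos4 : ∀ z : ℝ,
      cos (2 * (2 * arctan z)) = ((1 - z ^ 2) ^ 2 - 4 * z ^ 2) / (1 + z ^ 2) ^ 2 := by
    intro z
    rw [cos_two_mul, cos_two_mul_arctan]
    field_simp
    ring
  simp only [Gfun, fNL, LamQ, mul_sub, sin_sub, hQ, sin4, cos4, zpow_neg, zpow_natCast, pow_mul']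
  rw [hx, profile]
  field_simp
  ring

def majorant (a y : ℝ) : ℝ := 3 / 2 / (a ^ 2 + y ^ 2) + 3 * a * y / (a ^ 2 + y ^ 2) ^ 2

def majorantPrimitive (a y : ℝ) : ℝ :=
  3 / (2 * a) * arctan (y / a) - 3 * a / 2 * (a ^ 2 + y ^ 2)⁻¹

lemma hasDerivAt_majorantPrimitive {a : ℝ} (ha : 0 < a) (y : ℝ) :
    HasDerivAt (majorantPrimitive a) (majorant a y) y := by
  have hden : a ^ 2 + y ^ 2 ≠ 0 := by positivity
  have hsq : HasDerivAt (fun y : ℝ => a ^ 2 + y ^ 2) (2 * y) y := by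
    simpa using (hasDerivAt_pow 2 y).const_add (a ^ 2)
  have H : HasDerivAt (majorantPrimitive a)
      (3 / (2 * a) * (1 / (1 + (y / a) ^ 2) * (1 / a))
        - 3 * a / 2 * (-(2 * y) / (a ^ 2 + y ^ 2) ^ 2)) y :=
    (((hasDerivAt_id y).div_const a).arctan.const_mul (3 / (2 * a))).sub
      ((hsq.inv hden).const_mul (3 * a / 2))
  convert H using 1
  unfold majorant
  field_simp
  ring

lemma tendsto_majorantPrimitive {a : ℝ} (ha : 0 < a) :
    Tendsto (majorantPrimitive a) atTop (𝓝 (3 * π / (4 * a))) := by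
  have harctan : Tendsto (fun y => arctan (y / a)) atTop (𝓝 (π / 2)) :=
    (tendsto_arctan_atTop.mono_right nhdsWithin_le_nhds).comp (tendsto_id.atTop_div_const ha)
  have hinv : Tendsto (fun y : ℝ => (a ^ 2 + y ^ 2)⁻¹) atTop (𝓝 0) :=
    tendsto_inv_atTop_zero.comp
      (tendsto_atTop_add_const_left _ _ (tendsto_pow_atTop two_ne_zero))
  have H : Tendsto (majorantPrimitive a) atTop (𝓝 (3 / (2 * a) * (π / 2) - 3 * a / 2 * 0)) :=
    (harctan.const_mul (3 / (2 * a))).sub (hinv.const_mul (3 * a / 2))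
  convert H using 2
  field_simp
  ring

lemma majorantPrimitive_zero {a : ℝ} (ha : 0 < a) :
    majorantPrimitive a 0 = -(3 / (2 * a)) := by
  simp only [majorantPrimitive, zero_div, arctan_zero]
  field_simp
  ring

lemma hasDerivAt_div_pow (k : ℕ) {mu r : ℝ} (hr : r ≠ 0) :
    HasDerivAt (fun s : ℝ => (s / mu) ^ k) (k * (r / mu) ^ k / r) r := by
  have H : HasDerivAt (fun s : ℝ => (s / mu) ^ k) (k * (r / mu) ^ (k - 1) * (1 / mu)) r :=
    ((hasDerivAt_id r).div_const mu).pow k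
  convert H using 1
  rcases k with _ | k
  · simp
  · rw [Nat.add_sub_cancel, pow_succ]
    field_simp

lemma integrableOn_majorant_comp_div_pow_and_integral_eq {k : ℕ} (hk : k ≠ 0) {a mu : ℝ}
    (ha : 0 < a) (hmu : 0 < mu) :
    IntegrableOn (fun r => majorant a ((r / mu) ^ k) * (k * (r / mu) ^ k / r)) (Ioi 0) ∧
      ∫ r in Ioi 0, majorant a ((r / mu) ^ k) * (k * (r / mu) ^ k / r)
        = (3 * π + 6) / (4 * a) := by
  have hderiv : ∀ r ∈ Ioi (0 : ℝ), HasDerivAt (fun r => majorantPrimitive a ((r / mu) ^ k))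
      (majorant a ((r / mu) ^ k) * (k * (r / mu) ^ k / r)) r := fun r hr =>
    (hasDerivAt_majorantPrimitive ha _).comp r (hasDerivAt_div_pow k (ne_of_gt hr))
  have hcont : ContinuousWithinAt (fun r => majorantPrimitive a ((r / mu) ^ k)) (Ici 0) 0 :=
    ((continuous_iff_continuousAt.2 fun y =>
        (hasDerivAt_majorantPrimitive ha y).continuousAt).comp
      (by fun_prop : Continuous fun r : ℝ => (r / mu) ^ k)).continuousWithinAt
  have hnonneg : ∀ r ∈ Ioi (0 : ℝ),
      0 ≤ majorant a ((r / mu) ^ k) * (k * (r / mu) ^ k / r) := by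
    intro r (hr : 0 < r)
    unfold majorant
    positivity
  have hlim :
      Tendsto (fun r => majorantPrimitive a ((r / mu) ^ k)) atTop (𝓝 (3 * π / (4 * a))) :=
    (tendsto_majorantPrimitive ha).comp
      ((tendsto_pow_atTop hk).comp (tendsto_id.atTop_div_const hmu))
  refine ⟨integrableOn_Ioi_deriv_of_nonneg hcont hderiv hnonneg hlim, ?_⟩
  rw [integral_Ioi_of_hasDerivAt_of_nonneg hcont hderiv hnonneg hlim, zero_div, zero_pow hk,
    majorantPrimitive_zero ha]
  field_simp
  ring

lemma abs_integral_le_of_le_majorant {k : ℕ} (hk : k ≠ 0) {a mu c : ℝ} (ha : 0 < a)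
    (hmu : 0 < mu) {F : ℝ → ℝ}
    (hF : ∀ r ∈ Ioi 0, |F r| ≤ c * (majorant a ((r / mu) ^ k) * (k * (r / mu) ^ k / r))) :
    |∫ r in Ioi 0, F r| ≤ c * ((3 * π + 6) / (4 * a)) := by
  obtain ⟨hint, hval⟩ := integrableOn_majorant_comp_div_pow_and_integral_eq hk ha hmu
  rw [← hval, ← integral_const_mul]
  exact norm_integral_le_of_norm_le (f := F) (hint.const_mul c)
    (ae_restrict_of_forall_mem measurableSet_Ioi hF)

lemma profile_div_one_add_sq_le_majorant {W y : ℝ} (hW : 0 < W) (hy : 0 ≤ y) :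
    profile W y / (1 + y ^ 2) ≤ majorant 1 y := by
  have hA : 0 < W ^ 2 + y ^ 2 := by positivity
  have hsep : majorant 1 y - profile W y / (1 + y ^ 2)
      = ((3 / 2) * (W ^ 2 + y ^ 2) ^ 2 * (1 + y ^ 2) ^ 2
          + 3 * y * (W ^ 2 + y ^ 2) ^ 2 * (1 + y ^ 2)
          - y * (W ^ 3 + 3 * W * y ^ 2 + 3 * y ^ 4 + y ^ 6))
        / ((W ^ 2 + y ^ 2) ^ 2 * (1 + y ^ 2) ^ 3) := by
    unfold majorant profile
    field_simp
  have hAM : 2 * W * y * (W ^ 2 + y ^ 2) ≤ (W ^ 2 + y ^ 2) ^ 2 := by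
    nlinarith [mul_nonneg (sq_nonneg (W - y)) hA.le]
  have hB : 1 ≤ (1 + y ^ 2) ^ 2 := by nlinarith [sq_nonneg y]
  have h1 : W * y * (W ^ 2 + 3 * y ^ 2) ≤ (3 / 2) * (W ^ 2 + y ^ 2) ^ 2 * (1 + y ^ 2) ^ 2 := by
    nlinarith [mul_le_mul_of_nonneg_left hB (sq_nonneg (W ^ 2 + y ^ 2)), mul_nonneg hW.le hy,
      mul_nonneg (mul_nonneg hW.le hy) (sq_nonneg W)]
  have h2 : y ^ 5 * (3 + y ^ 2) ≤ 3 * y * (W ^ 2 + y ^ 2) ^ 2 * (1 + y ^ 2) := by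
    have hy4 : y ^ 4 ≤ (W ^ 2 + y ^ 2) ^ 2 := by nlinarith [sq_nonneg W, sq_nonneg (W * y)]
    nlinarith [mul_le_mul_of_nonneg_left hy4 (by positivity : 0 ≤ 3 * y * (1 + y ^ 2)),
      pow_nonneg hy 7]
  rw [← sub_nonneg, hsep]
  apply div_nonneg _ (by positivity)
  nlinarith [h1, h2]

lemma profile_div_sq_add_sq_le_majorant {W y : ℝ} (hW : 0 < W) (hy : 0 ≤ y) :
    profile W y / (W ^ 2 + y ^ 2) ≤ majorant W y := by
  have hsep : majorant W y - profile W y / (W ^ 2 + y ^ 2)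
      = ((3 / 2) * (W ^ 2 + y ^ 2) ^ 2 * (1 + y ^ 2) ^ 2
          + 3 * W * y * (W ^ 2 + y ^ 2) * (1 + y ^ 2) ^ 2
          - y * (W ^ 3 + 3 * W * y ^ 2 + 3 * y ^ 4 + y ^ 6))
        / ((W ^ 2 + y ^ 2) ^ 3 * (1 + y ^ 2) ^ 2) := by
    unfold majorant profile
    field_simp
  have hB : 1 ≤ (1 + y ^ 2) ^ 2 := by nlinarith [sq_nonneg y]
  have h1 : W * y * (W ^ 2 + 3 * y ^ 2) ≤ 3 * W * y * (W ^ 2 + y ^ 2) * (1 + y ^ 2) ^ 2 := by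
    have hWy : 0 ≤ W * y * (W ^ 2 + y ^ 2) := by positivity
    nlinarith [mul_le_mul_of_nonneg_left hB hWy, mul_nonneg (mul_nonneg hW.le hy) (sq_nonneg W)]
  have h2 : y ^ 5 * (3 + y ^ 2) ≤ (3 / 2) * (W ^ 2 + y ^ 2) ^ 2 * (1 + y ^ 2) ^ 2 := by
    have hy4 : y ^ 4 ≤ (W ^ 2 + y ^ 2) ^ 2 := by nlinarith [sq_nonneg W, sq_nonneg (W * y)]
    have hpoly : y ^ 5 * (3 + y ^ 2) ≤ (3 / 2) * y ^ 4 * (1 + y ^ 2) ^ 2 := by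
      nlinarith [mul_nonneg (pow_nonneg hy 4) (sq_nonneg (y - 1)),
        mul_nonneg (pow_nonneg hy 6) (sq_nonneg (y - 1)), pow_nonneg hy 7]
    nlinarith [mul_le_mul_of_nonneg_right hy4 (sq_nonneg (1 + y ^ 2))]
  rw [← sub_nonneg, hsep]
  apply div_nonneg _ (by positivity)
  nlinarith [h1, h2]

lemma abs_mu_integrand_le (k : ℕ) {lam mu r : ℝ} (hlam : 0 < lam) (hmu : 0 < mu) (hr : 0 < r) :
    |mu⁻¹ * LamQ k (r / mu) * (Gfun k lam mu r / r ^ 2) * r|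
      ≤ 32 * k ^ 2 * ((lam / mu) ^ k) ^ 2 / mu
          * (majorant 1 ((r / mu) ^ k) * (k * (r / mu) ^ k / r)) := by
  set W := (lam / mu) ^ k
  set y := (r / mu) ^ k
  have hW : 0 < W := by positivity
  have hy : 0 < y := by positivity
  have hint : mu⁻¹ * LamQ k (r / mu) * (Gfun k lam mu r / r ^ 2) * r
      = -(32 * k ^ 2 * W ^ 2 / mu * (profile W y / (1 + y ^ 2) * (k * y / r))) := by
    rw [Gfun_eq_profile k hlam hmu hr, LamQ, pow_mul']
    field_simp
    ring
  rw [hint, abs_neg, abs_of_nonneg (by unfold profile; positivity)]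
  gcongr
  exact profile_div_one_add_sq_le_majorant hW hy.le

lemma abs_lam_integrand_le (k : ℕ) {lam mu r : ℝ} (hlam : 0 < lam) (hmu : 0 < mu) (hr : 0 < r) :
    |lam⁻¹ * LamQ k (r / lam) * (Gfun k lam mu r / r ^ 2) * r|
      ≤ 32 * k ^ 2 * ((lam / mu) ^ k) ^ 3 / lam
          * (majorant ((lam / mu) ^ k) ((r / mu) ^ k) * (k * (r / mu) ^ k / r)) := by
  set W := (lam / mu) ^ k
  set y := (r / mu) ^ k
  have hW : 0 < W := by positivity
  have hy : 0 < y := by positivity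
  have hx : (r / lam) ^ k = y / W := by rw [← div_pow]; congr 1; field_simp
  have hint : lam⁻¹ * LamQ k (r / lam) * (Gfun k lam mu r / r ^ 2) * r
      = -(32 * k ^ 2 * W ^ 3 / lam * (profile W y / (W ^ 2 + y ^ 2) * (k * y / r))) := by
    rw [Gfun_eq_profile k hlam hmu hr, LamQ, pow_mul', hx]
    field_simp
    ring
  rw [hint, abs_neg, abs_of_nonneg (by unfold profile; positivity)]
  gcongr
  exact profile_div_sq_add_sq_le_majorant hW hy.le

/-- `|⟨ΛQ_μ̲ | r⁻² G_{λ,μ}⟩| ≤ C ν^{2k+1}/λ` and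
`|⟨ΛQ_λ̲ | r⁻² G_{λ,μ}⟩| ≤ C ν^{2k}/λ`. -/
theorem stmt6 (k : ℕ) (hk : 4 ≤ k) :
    ∃ C : ℝ, 0 < C ∧
      ∀ lam mu : ℝ, 0 < lam → 0 < mu → lam / mu ≤ 1 / 2 →
        |∫ r in Ioi (0 : ℝ), mu⁻¹ * LamQ k (r / mu) * (Gfun k lam mu r / r ^ 2) * r|
            ≤ C * (lam / mu) ^ (2 * k + 1) / lam ∧
        |∫ r in Ioi (0 : ℝ), lam⁻¹ * LamQ k (r / lam) * (Gfun k lam mu r / r ^ 2) * r|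
            ≤ C * (lam / mu) ^ (2 * k) / lam := by
  have hk0 : k ≠ 0 := by omega
  refine ⟨(24 * π + 48) * k ^ 2, by positivity, fun lam mu hlam hmu _ => ⟨?_, ?_⟩⟩
  · calc _ ≤ 32 * k ^ 2 * ((lam / mu) ^ k) ^ 2 / mu * ((3 * π + 6) / (4 * 1)) :=
          abs_integral_le_of_le_majorant hk0 one_pos hmu fun r hr =>
            abs_mu_integrand_le k hlam hmu hr
      _ = _ := by
          rw [pow_succ (lam / mu), pow_mul']
          field_simp
          ring
  · calc _ ≤ 32 * k ^ 2 * ((lam / mu) ^ k) ^ 3 / lam * ((3 * π + 6) / (4 * (lam / mu) ^ k)) :=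
          abs_integral_le_of_le_majorant hk0 (by positivity) hmu fun r hr =>
            abs_lam_integrand_le k hlam hmu hr
      _ = _ := by
          rw [pow_mul']
          field_simp
          ring

end
end

section
/- Let k ≥ 4 be an integer, f(u) := (k²/2) sin(2u), and for λ, μ > 0 let G_{λ,μ}(r) := f(Q_λ(r) - Q_μ(r)) - f(Q_λ(r)) + f(Q_μ(r)) - 4 (r/μ)^k ΛQ_λ(r)² - 4 (r/λ)^{-k} ΛQ_μ(r)², a smooth function of r. There is a constant C > 0 such that for all λ, μ > 0 with ν := λ/μ ≤ 1/2: (∫₀^∞ r^{-4} (∂_r G_{λ,μ}(r))² r dr)^{1/2} ≤ C ν^{2k}/λ². -/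
open MeasureTheory Set Filter

noncomputable section

/-!
In the variables `x = (r/λ)^k` and `y = (r/μ)^k`, the double-angle formulas for `2 arctan` turn
`G_{λ,μ}` into the rational function `-16k² y² (3x² + 1 + x³y(3 + y²)) / (x (1+x²)² (1+y²)²)`,
whose factor `y²` carries the smallness `ν^{2k}`. Since `x` and `y` are homogeneous of degree `k`
in `r`, `r ∂_r G = k (x ∂ₓ + y ∂_y) G`, and with `y = ν^k x ≤ x` this gives `|∂_r G| ≤ C k³ ν^{2k} min(x, 1) / r`. Finally
`∫ min(x,1)² r⁻⁵ dr ≤ λ⁻⁴`, splitting at `r = λ`; convergence at `0` needs `k ≥ 3`.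
-/

namespace Real

lemma sin_two_mul_arctan (x : ℝ) : sin (2 * arctan x) = 2 * x / (1 + x ^ 2) := by
  have hsq : √(1 + x ^ 2) ^ 2 = 1 + x ^ 2 := sq_sqrt (by positivity)
  have hne : √(1 + x ^ 2) ≠ 0 := by positivity
  rw [sin_two_mul, sin_arctan, cos_arctan]
  field_simp
  rw [hsq]

lemma cos_two_mul_arctan (x : ℝ) : cos (2 * arctan x) = (1 - x ^ 2) / (1 + x ^ 2) := by
  have hsq : √(1 + x ^ 2) ^ 2 = 1 + x ^ 2 := sq_sqrt (by positivity)
  rw [cos_two_mul, cos_arctan, div_pow, hsq]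
  field_simp
  ring

end Real

lemma sin_two_mul_Qfun (k : ℕ) (r : ℝ) :
    Real.sin (2 * Qfun k r) = 4 * r ^ k * (1 - (r ^ k) ^ 2) / (1 + (r ^ k) ^ 2) ^ 2 := by
  have : (1 : ℝ) + (r ^ k) ^ 2 ≠ 0 := by positivity
  rw [Qfun, Real.sin_two_mul, Real.sin_two_mul_arctan, Real.cos_two_mul_arctan]
  field_simp
  ring

lemma cos_two_mul_Qfun (k : ℕ) (r : ℝ) :
    Real.cos (2 * Qfun k r) = ((1 - (r ^ k) ^ 2) ^ 2 - 4 * (r ^ k) ^ 2) / (1 + (r ^ k) ^ 2) ^ 2 := by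
  have : (1 : ℝ) + (r ^ k) ^ 2 ≠ 0 := by positivity
  rw [Qfun, Real.cos_two_mul, Real.cos_two_mul_arctan]
  field_simp
  ring

lemma LamQ_eq (k : ℕ) (r : ℝ) : LamQ k r = 2 * k * r ^ k / (1 + (r ^ k) ^ 2) := by
  rw [LamQ, ← pow_mul, mul_comm k 2]

def gRat (k : ℕ) (x y : ℝ) : ℝ :=
  -16 * k ^ 2 * y ^ 2 * (3 * x ^ 2 + 1 + x ^ 3 * y * (3 + y ^ 2))
    / (x * ((1 + x ^ 2) * (1 + y ^ 2)) ^ 2)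

lemma Gfun_eq_gRat (k : ℕ) {lam mu r : ℝ} (hl : lam ≠ 0) (hr : r ≠ 0) :
    Gfun k lam mu r = gRat k ((r / lam) ^ k) ((r / mu) ^ k) := by
  have hx : (r / lam) ^ k ≠ 0 := by positivity
  have hQ : 2 * (Qfun k (r / lam) - Qfun k (r / mu))
      = 2 * Qfun k (r / lam) - 2 * Qfun k (r / mu) := by ring
  rw [Gfun, fNL, fNL, fNL, hQ, Real.sin_sub, sin_two_mul_Qfun, sin_two_mul_Qfun,
    cos_two_mul_Qfun, cos_two_mul_Qfun, LamQ_eq, LamQ_eq, zpow_neg, zpow_natCast, gRat]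
  set x := (r / lam) ^ k
  set y := (r / mu) ^ k
  field_simp
  ring

lemma hasDerivAt_div_const_pow (k : ℕ) (c : ℝ) {r : ℝ} (hr : r ≠ 0) :
    HasDerivAt (fun s => (s / c) ^ k) (k / r * (r / c) ^ k) r := by
  refine (((hasDerivAt_id r).div_const c).fun_pow k).congr_deriv ?_
  rcases k with _ | k
  · simp
  · simp only [id, Nat.add_sub_cancel, pow_succ]
    field_simp

/-- The Euler derivative `(x ∂ₓ + y ∂_y) (gRat k)`. -/
def gRatEuler (k : ℕ) (x y : ℝ) : ℝ :=
  -16 * k ^ 2 * y ^ 2 * ((9 * x ^ 2 + 1 + 15 * x ^ 3 * y + 7 * x ^ 3 * y ^ 3) * ((1 + x ^ 2) * (1 + y ^ 2))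
      - 2 * (3 * x ^ 2 + 1 + x ^ 3 * y * (3 + y ^ 2)) * (2 * x ^ 2 * (1 + y ^ 2) + 2 * y ^ 2 * (1 + x ^ 2)))
    / (x * ((1 + x ^ 2) * (1 + y ^ 2)) ^ 3)

lemma HasDerivAt.gRat_comp (k : ℕ) {u v : ℝ → ℝ} {a r : ℝ} (hu : HasDerivAt u (a * u r) r)
    (hv : HasDerivAt v (a * v r) r) (hu0 : u r ≠ 0) :
    HasDerivAt (fun s => gRat k (u s) (v s)) (a * gRatEuler k (u r) (v r)) r := by
  have hnum := (((hv.fun_pow 2).const_mul (-16 * (k : ℝ) ^ 2))).mul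
    ((((hu.fun_pow 2).const_mul 3).add_const 1).add
      (((hu.fun_pow 3).mul hv).mul ((hv.fun_pow 2).const_add 3)))
  have hden := hu.mul ((((hu.fun_pow 2).const_add 1).mul ((hv.fun_pow 2).const_add 1)).fun_pow 2)
  have hD : (1 + u r ^ 2) * (1 + v r ^ 2) ≠ 0 := by positivity
  refine (hnum.div hden (by simp only [Pi.mul_apply]; positivity)).congr_deriv ?_
  simp only [gRatEuler, Pi.mul_apply, Pi.add_apply]
  field_simp
  ring

lemma mul_poly_le_min_mul_sq {x y : ℝ} (hx : 0 < x) (hy : 0 ≤ y) (hyx : y ≤ x) :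
    x * (33 * x ^ 2 + 9 + 39 * x ^ 3 * y + 15 * x ^ 3 * y ^ 3)
      ≤ 96 * min x 1 * ((1 + x ^ 2) * (1 + y ^ 2)) ^ 2 := by
  rcases le_total x 1 with hx1 | hx1
  · rw [min_eq_left hx1]
    have hy1 : y ≤ 1 := hyx.trans hx1
    have hD : 1 ≤ ((1 + x ^ 2) * (1 + y ^ 2)) ^ 2 :=
      one_le_pow₀ (one_le_mul_of_one_le_of_one_le (by nlinarith) (by nlinarith))
    have hpoly : 33 * x ^ 2 + 9 + 39 * x ^ 3 * y + 15 * x ^ 3 * y ^ 3 ≤ 96 := by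
      have hx2 : x ^ 2 ≤ 1 := pow_le_one₀ hx.le hx1
      have hx3 : x ^ 3 ≤ 1 := pow_le_one₀ hx.le hx1
      have hy3 : y ^ 3 ≤ 1 := pow_le_one₀ hy hy1
      have hx3y : x ^ 3 * y ≤ 1 := mul_le_one₀ hx3 hy hy1
      have hx3y3 : x ^ 3 * y ^ 3 ≤ 1 := mul_le_one₀ hx3 (by positivity) hy3
      linarith
    calc x * (33 * x ^ 2 + 9 + 39 * x ^ 3 * y + 15 * x ^ 3 * y ^ 3) ≤ x * 96 := by gcongr
      _ ≤ 96 * x * ((1 + x ^ 2) * (1 + y ^ 2)) ^ 2 := by nlinarith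
  · rw [min_eq_right hx1]
    have hx4 : x * (33 * x ^ 2 + 9 + 39 * x ^ 3 * y + 15 * x ^ 3 * y ^ 3)
        ≤ x ^ 4 * (42 + 39 * y + 15 * y ^ 3) := by
      have h3 : x ^ 3 ≤ x ^ 4 := pow_le_pow_right₀ hx1 (by norm_num)
      have h1 : x ≤ x ^ 4 := le_self_pow₀ hx1 (by norm_num)
      nlinarith [mul_le_mul_of_nonneg_left h3 (by norm_num : (0 : ℝ) ≤ 33)]
    have hy_le : y ≤ (1 + y ^ 2) ^ 2 := by nlinarith [sq_nonneg (y - 1), sq_nonneg y]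
    have hy3_le : y ^ 3 ≤ (1 + y ^ 2) ^ 2 := by nlinarith [sq_nonneg (y - 1), sq_nonneg y]
    have hone : 1 ≤ (1 + y ^ 2) ^ 2 := one_le_pow₀ (by nlinarith)
    calc x * (33 * x ^ 2 + 9 + 39 * x ^ 3 * y + 15 * x ^ 3 * y ^ 3)
        ≤ x ^ 4 * (42 + 39 * y + 15 * y ^ 3) := hx4
      _ ≤ (1 + x ^ 2) ^ 2 * (96 * (1 + y ^ 2) ^ 2) := by
        gcongr
        · nlinarith
        · linarith
      _ = 96 * 1 * ((1 + x ^ 2) * (1 + y ^ 2)) ^ 2 := by ring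

lemma abs_gRatEuler_le (k : ℕ) {x y : ℝ} (hx : 0 < x) (hy : 0 ≤ y) (hyx : y ≤ x) :
    |gRatEuler k x y| ≤ 1536 * k ^ 2 * (y / x) ^ 2 * min x 1 := by
  set D := (1 + x ^ 2) * (1 + y ^ 2)
  set A := 9 * x ^ 2 + 1 + 15 * x ^ 3 * y + 7 * x ^ 3 * y ^ 3
  set N := 3 * x ^ 2 + 1 + x ^ 3 * y * (3 + y ^ 2)
  set E := 2 * x ^ 2 * (1 + y ^ 2) + 2 * y ^ 2 * (1 + x ^ 2)
  have hD : 0 < D := by positivity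
  have hA : 0 ≤ A := by positivity
  have hN : 0 ≤ N := by positivity
  have hE : E ≤ 4 * D := by nlinarith [mul_nonneg (sq_nonneg x) (sq_nonneg y)]
  have hW : |A * D - 2 * N * E| ≤ (33 * x ^ 2 + 9 + 39 * x ^ 3 * y + 15 * x ^ 3 * y ^ 3) * D := by
    rw [abs_le]
    constructor <;> nlinarith [mul_le_mul_of_nonneg_left hE hN, mul_nonneg hA hD.le,
      mul_nonneg hN (by positivity : (0 : ℝ) ≤ E)]
  have hxW : x * |A * D - 2 * N * E| ≤ 96 * min x 1 * D ^ 3 := by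
    calc x * |A * D - 2 * N * E|
        ≤ x * (33 * x ^ 2 + 9 + 39 * x ^ 3 * y + 15 * x ^ 3 * y ^ 3) * D :=
          (mul_le_mul_of_nonneg_left hW hx.le).trans_eq (mul_assoc _ _ _).symm
      _ ≤ 96 * min x 1 * D ^ 2 * D :=
          mul_le_mul_of_nonneg_right (mul_poly_le_min_mul_sq hx hy hyx) hD.le
      _ = 96 * min x 1 * D ^ 3 := by ring
  have heq : gRatEuler k x y = -(16 * k ^ 2 * (y / x) ^ 2 * (x * (A * D - 2 * N * E)) / D ^ 3) := by
    simp only [gRatEuler, A, D, N, E]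
    field_simp
  rw [heq, abs_neg, abs_div, abs_mul, abs_mul x, abs_of_pos hx, abs_of_pos (pow_pos hD 3),
    abs_of_nonneg (by positivity : (0 : ℝ) ≤ 16 * k ^ 2 * (y / x) ^ 2), div_le_iff₀ (by positivity)]
  calc 16 * k ^ 2 * (y / x) ^ 2 * (x * |A * D - 2 * N * E|)
      ≤ 16 * k ^ 2 * (y / x) ^ 2 * (96 * min x 1 * D ^ 3) := by gcongr
    _ = 1536 * k ^ 2 * (y / x) ^ 2 * min x 1 * D ^ 3 := by ring

lemma abs_deriv_Gfun_le (k : ℕ) {lam mu r : ℝ} (hl : 0 < lam) (hlm : lam ≤ mu) (hr : 0 < r) :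
    |deriv (Gfun k lam mu) r| ≤ 1536 * k ^ 3 * (lam / mu) ^ (2 * k) * min ((r / lam) ^ k) 1 / r := by
  have hm : 0 < mu := hl.trans_le hlm
  have hGfun : Gfun k lam mu =ᶠ[nhds r] fun s => gRat k ((s / lam) ^ k) ((s / mu) ^ k) := by
    filter_upwards [Ioi_mem_nhds hr] with s hs
    exact Gfun_eq_gRat k hl.ne' (ne_of_gt hs)
  have hderiv := HasDerivAt.gRat_comp k (hasDerivAt_div_const_pow k lam hr.ne')
    (hasDerivAt_div_const_pow k mu hr.ne') (by positivity)
  have hyx : (r / mu) ^ k / (r / lam) ^ k = (lam / mu) ^ k := by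
    rw [← div_pow]; congr 1; field_simp
  have hbound := abs_gRatEuler_le k (x := (r / lam) ^ k) (y := (r / mu) ^ k) (by positivity)
    (by positivity) (pow_le_pow_left₀ (by positivity) (div_le_div_of_nonneg_left hr.le hl hlm) k)
  rw [hGfun.deriv_eq, hderiv.deriv, abs_mul, abs_of_nonneg (by positivity : (0 : ℝ) ≤ k / r)]
  calc k / r * |gRatEuler k ((r / lam) ^ k) ((r / mu) ^ k)|
      ≤ k / r * (1536 * k ^ 2 * ((lam / mu) ^ k) ^ 2 * min ((r / lam) ^ k) 1) := by
        rw [← hyx]; gcongr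
    _ = 1536 * k ^ 3 * (lam / mu) ^ (2 * k) * min ((r / lam) ^ k) 1 / r := by
        rw [mul_comm 2 k, pow_mul]; ring

section MinPowIntegral

variable {k : ℕ} {lam : ℝ}

lemma min_pow_sq_div_pow_five_eqOn_Ioc (hk : 3 ≤ k) (hl : 0 < lam) :
    EqOn (fun r => min ((r / lam) ^ k) 1 ^ 2 / r ^ 5) (fun r => r ^ (2 * k - 5) / lam ^ (2 * k))
      (Ioc 0 lam) := by
  rintro r ⟨hr, hrl⟩
  have hpow : r ^ (2 * k) = r ^ (2 * k - 5) * r ^ 5 := by rw [← pow_add]; congr 1; omega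
  simp only
  rw [min_eq_left (pow_le_one₀ (by positivity) ((div_le_one hl).2 hrl)), ← pow_mul, div_pow,
    mul_comm k 2, hpow]
  field_simp

lemma min_pow_sq_div_pow_five_eqOn_Ioi (hl : 0 < lam) :
    EqOn (fun r => min ((r / lam) ^ k) 1 ^ 2 / r ^ 5) (fun r => r ^ (-5 : ℝ)) (Ioi lam) := by
  intro r hr
  have hr0 : 0 < r := hl.trans hr
  simp only
  rw [min_eq_right (one_le_pow₀ ((one_le_div hl).2 (le_of_lt hr))), Real.rpow_neg hr0.le]
  norm_num

lemma integrableOn_min_pow_sq_div_pow_five (hk : 3 ≤ k) (hl : 0 < lam) :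
    IntegrableOn (fun r => min ((r / lam) ^ k) 1 ^ 2 / r ^ 5) (Ioi 0) := by
  rw [← Ioc_union_Ioi_eq_Ioi hl.le]
  refine IntegrableOn.union ?_ ?_
  · exact (Continuous.integrableOn_Ioc (by fun_prop)).congr_fun
      (min_pow_sq_div_pow_five_eqOn_Ioc hk hl).symm measurableSet_Ioc
  · exact (integrableOn_Ioi_rpow_of_lt (by norm_num) hl).congr_fun
      (min_pow_sq_div_pow_five_eqOn_Ioi hl).symm measurableSet_Ioi

lemma integral_min_pow_sq_div_pow_five_le (hk : 3 ≤ k) (hl : 0 < lam) :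
    ∫ r in Ioi 0, min ((r / lam) ^ k) 1 ^ 2 / r ^ 5 ≤ 1 / lam ^ 4 := by
  have hint := integrableOn_min_pow_sq_div_pow_five hk hl
  rw [← Ioc_union_Ioi_eq_Ioi hl.le] at hint ⊢
  rw [setIntegral_union (Ioc_disjoint_Ioi le_rfl) measurableSet_Ioi
      (hint.mono_set subset_union_left) (hint.mono_set subset_union_right),
    setIntegral_congr_fun measurableSet_Ioc (min_pow_sq_div_pow_five_eqOn_Ioc hk hl),
    setIntegral_congr_fun measurableSet_Ioi (min_pow_sq_div_pow_five_eqOn_Ioi hl),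
    integral_Ioi_rpow_of_lt (by norm_num) hl, integral_div, ← intervalIntegral.integral_of_le hl.le,
    integral_pow, zero_pow (Nat.succ_ne_zero _), show 2 * k - 5 + 1 = 2 * k - 4 by omega]
  have hpow : lam ^ (2 * k) = lam ^ (2 * k - 4) * lam ^ 4 := by rw [← pow_add]; congr 1; omega
  have hk' : (2 : ℝ) ≤ ((2 * k - 5 : ℕ) : ℝ) + 1 := by
    have : (1 : ℝ) ≤ ((2 * k - 5 : ℕ) : ℝ) := by exact_mod_cast (by omega : 1 ≤ 2 * k - 5)
    linarith
  have hrpow : lam ^ (-5 + 1 : ℝ) = 1 / lam ^ 4 := by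
    rw [show (-5 + 1 : ℝ) = -((4 : ℕ) : ℝ) by norm_num, Real.rpow_neg hl.le, Real.rpow_natCast,
      one_div]
  have hIoc : lam ^ (2 * k - 4) / (((2 * k - 5 : ℕ) : ℝ) + 1) / (lam ^ (2 * k - 4) * lam ^ 4)
      ≤ 1 / (2 * lam ^ 4) := by
    rw [show lam ^ (2 * k - 4) / (((2 * k - 5 : ℕ) : ℝ) + 1) / (lam ^ (2 * k - 4) * lam ^ 4)
      = 1 / ((((2 * k - 5 : ℕ) : ℝ) + 1) * lam ^ 4) by field_simp]
    gcongr
  rw [hrpow, hpow, sub_zero]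
  have hIoi : -(1 / lam ^ 4) / (-5 + 1) = 1 / (4 * lam ^ 4) := by field_simp; norm_num
  have hsum : 1 / (2 * lam ^ 4) + 1 / (4 * lam ^ 4) ≤ 1 / lam ^ 4 := by
    rw [div_add_div _ _ (by positivity) (by positivity), div_le_div_iff₀ (by positivity)
      (by positivity)]
    nlinarith [pow_pos hl 4]
  linarith

end MinPowIntegral

/-- `‖r⁻² ∂_r G_{λ,μ}‖_{L²} ≤ C ν^{2k}/λ²`, with `L²` w.r.t. `r dr`. -/
theorem stmt7 (k : ℕ) (hk : 4 ≤ k) :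
    ∃ C : ℝ, 0 < C ∧
      ∀ lam mu : ℝ, 0 < lam → 0 < mu → lam / mu ≤ 1 / 2 →
        Real.sqrt (∫ r in Ioi (0 : ℝ), (deriv (Gfun k lam mu) r) ^ 2 / r ^ 4 * r)
          ≤ C * (lam / mu) ^ (2 * k) / lam ^ 2 := by
  have hk0 : (0 : ℝ) < k := by exact_mod_cast (by omega : 0 < k)
  refine ⟨1536 * k ^ 3, by positivity, fun lam mu hl hm hν => ?_⟩
  have hlm : lam ≤ mu := by rw [div_le_iff₀ hm] at hν; linarith
  set c := 1536 * (k : ℝ) ^ 3 * (lam / mu) ^ (2 * k)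
  have hpt : ∀ r ∈ Ioi (0 : ℝ), (deriv (Gfun k lam mu) r) ^ 2 / r ^ 4 * r
      ≤ c ^ 2 * (min ((r / lam) ^ k) 1 ^ 2 / r ^ 5) := by
    intro r (hr : 0 < r)
    have hsq : (deriv (Gfun k lam mu) r) ^ 2 ≤ (c * min ((r / lam) ^ k) 1 / r) ^ 2 := by
      rw [← sq_abs]
      exact pow_le_pow_left₀ (abs_nonneg _) (abs_deriv_Gfun_le k hl hlm hr) 2
    calc (deriv (Gfun k lam mu) r) ^ 2 / r ^ 4 * r
        ≤ (c * min ((r / lam) ^ k) 1 / r) ^ 2 / r ^ 4 * r := by gcongr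
      _ = c ^ 2 * (min ((r / lam) ^ k) 1 ^ 2 / r ^ 5) := by field_simp
  have hintegral : ∫ r in Ioi (0 : ℝ), (deriv (Gfun k lam mu) r) ^ 2 / r ^ 4 * r
      ≤ (c / lam ^ 2) ^ 2 := by
    calc ∫ r in Ioi (0 : ℝ), (deriv (Gfun k lam mu) r) ^ 2 / r ^ 4 * r
        ≤ ∫ r in Ioi (0 : ℝ), c ^ 2 * (min ((r / lam) ^ k) 1 ^ 2 / r ^ 5) :=
          integral_mono_of_nonneg
            ((ae_restrict_iff' measurableSet_Ioi).2 (ae_of_all _ fun r (hr : 0 < r) => by positivity))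
            ((integrableOn_min_pow_sq_div_pow_five (by omega) hl).const_mul _)
            ((ae_restrict_iff' measurableSet_Ioi).2 (ae_of_all _ hpt))
      _ ≤ c ^ 2 * (1 / lam ^ 4) := by
          rw [integral_const_mul]
          gcongr
          exact integral_min_pow_sq_div_pow_five_le (by omega) hl
      _ = (c / lam ^ 2) ^ 2 := by ring
  calc Real.sqrt (∫ r in Ioi (0 : ℝ), (deriv (Gfun k lam mu) r) ^ 2 / r ^ 4 * r)
      ≤ Real.sqrt ((c / lam ^ 2) ^ 2) := Real.sqrt_le_sqrt hintegral
    _ = c / lam ^ 2 := Real.sqrt_sq (by positivity)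
end
end
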